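/- Let 𝒱 be a join-specification of P, Φ = Γ_𝒱, and Υ the recursively defined operator using 𝒰_Φ without downward closure at successor steps. Then the complete lattice Φ[𝒫(P)] of Φ-closed sets is a frame (i.e., finite meets distribute over arbitrary joins: I ∧ ⋁_J K_j = ⋁_J (I ∧ K_j)) if and only if Φ(S) = Υ(S) for all S ⊆ P. -/

import Mathlib

universe u

variable {P : Type u} [PartialOrder P]

/-- The downward closure of a set in a poset. -/
def dcl (S : Set P) : Set P := {q | ∃ s ∈ S, q ≤ s}

/-- A join-specification: a collection of nonempty subsets each having a join,
containing all singletons. -/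
def IsJoinSpec (U : Set (Set P)) : Prop :=
  (∀ S ∈ U, ∃ j, IsLUB S j) ∧ (∀ p : P, {p} ∈ U) ∧ ∅ ∉ U

/-- A `U`-ideal: a down-set closed under joins of members of `U` contained in it. -/
def IsUIdeal (U : Set (Set P)) (I : Set P) : Prop :=
  IsLowerSet I ∧ ∀ S ∈ U, S ⊆ I → ∀ j, IsLUB S j → j ∈ I

/-- The smallest `U`-ideal containing `S`. -/
def GammaU (U : Set (Set P)) (S : Set P) : Set P :=
  ⋂₀ {I | IsUIdeal U I ∧ S ⊆ I}

/-- A standard closure operator on the powerset of a poset. -/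
def IsStdClosure (Γ : Set P → Set P) : Prop :=
  (∀ S, S ⊆ Γ S) ∧ (∀ S T, S ⊆ T → Γ S ⊆ Γ T) ∧ (∀ S, Γ (Γ S) = Γ S) ∧
  (∀ p : P, Γ {p} = {q | q ≤ p})

/-- The join-specification induced by a standard closure operator. -/
def UGamma (Γ : Set P → Set P) : Set (Set P) :=
  {S | (∃ j, IsLUB S j) ∧ ∀ C, Γ C = C → S ⊆ C → ∀ j, IsLUB S j → j ∈ C}

/-- The radius of a join-specification: the smallest cardinal exceeding the
cardinality of each of its members. -/
noncomputable def radius (U : Set (Set P)) : Cardinal :=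
  ⨆ S : U, Order.succ (Cardinal.mk S.1)

/-- The ordinal of the smallest regular cardinal at least the radius of `U`. -/
noncomputable def chiOrd (U : Set (Set P)) : Ordinal :=
  (sInf {c : Cardinal | c.IsRegular ∧ radius U ≤ c}).ord

/-- The transfinite iteration building the smallest `U`-ideal (with downward
closure at successor steps). -/
noncomputable def gammaIter (U : Set (Set P)) (S : Set P) (o : Ordinal) : Set P :=
  Ordinal.limitRecOn o (dcl S)
    (fun _ ih => dcl {p | ∃ T ∈ U, T ⊆ ih ∧ IsLUB T p})
    (fun o _ ih => ⋃ (b : Ordinal) (h : b < o), ih b h)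

/-- The transfinite iteration without downward closure at successor steps. -/
noncomputable def upsIter (U : Set (Set P)) (S : Set P) (o : Ordinal) : Set P :=
  Ordinal.limitRecOn o (dcl S)
    (fun _ ih => {p | ∃ T ∈ U, T ⊆ ih ∧ IsLUB T p})
    (fun o _ ih => ⋃ (b : Ordinal) (h : b < o), ih b h)

/-- The operator `Υ` built from `𝒰_Φ` where `Φ = Γ_𝒱`. -/
noncomputable def Upsilon (V : Set (Set P)) (S : Set P) : Set P :=
  upsIter (UGamma (GammaU V)) S (chiOrd (UGamma (GammaU V)))


/-!
Always `Υ(S) ⊆ Φ(S)`, and `Υ(S)` is closed under joins of members of `𝒰_Φ ⊇ 𝒱` because the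
iteration stabilises at the regular cardinal `χ'`; so `Φ = Υ` exactly when every `Υ(S)` is a
down-set. If the frame law holds and `b ≤ ⋁T` with `T ∈ 𝒰_Φ`, then `↓b ∩ Φ(T) = Φ(↓b ∩ ↓T)`
puts `b` into `Φ(↓b ∩ ↓T)`, which makes `b` the join of `↓b ∩ ↓T ∈ 𝒰_Φ`: each stage stays a
down-set. Conversely, if `Φ = Υ` then `I ∩ Φ(S) = I ∩ Υ(S) ⊆ Φ(I ∩ ↓S)` by induction on the
stages, since a join lying in the down-set `I` has all of its arguments in `I`.
-/

open Set

/-- `Φ[𝒫(P)]` is a frame, for `Φ = Γ_𝒱`. -/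
def FrameLaw (V : Set (Set P)) : Prop :=
  ∀ I : Set P, GammaU V I = I →
    ∀ 𝒦 : Set (Set P), (∀ K ∈ 𝒦, GammaU V K = K) →
      I ∩ GammaU V (⋃₀ 𝒦) = GammaU V (⋃ K ∈ 𝒦, I ∩ K)

section GammaU

variable {V : Set (Set P)}

lemma subset_gammaU (S : Set P) : S ⊆ GammaU V S :=
  fun _ hp _ hI => hI.2 hp

lemma isUIdeal_gammaU (S : Set P) : IsUIdeal V (GammaU V S) :=
  ⟨fun _ _ hba ha I hI => hI.1.1 hba (ha I hI),
    fun T hT hTS j hj I hI => hI.1.2 T hT (fun _ ht => hTS ht I hI) j hj⟩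

lemma gammaU_subset_of_isUIdeal {S I : Set P} (hI : IsUIdeal V I) (h : S ⊆ I) :
    GammaU V S ⊆ I :=
  fun _ hp => hp I ⟨hI, h⟩

lemma gammaU_mono {S T : Set P} (h : S ⊆ T) : GammaU V S ⊆ GammaU V T :=
  gammaU_subset_of_isUIdeal (isUIdeal_gammaU T) (h.trans (subset_gammaU T))

lemma gammaU_eq_self_iff {I : Set P} : GammaU V I = I ↔ IsUIdeal V I :=
  ⟨fun h => h ▸ isUIdeal_gammaU I,
    fun h => (gammaU_subset_of_isUIdeal h subset_rfl).antisymm (subset_gammaU I)⟩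

lemma isUIdeal_Iic (u : P) : IsUIdeal V (Iic u) :=
  ⟨fun _ _ hba ha => hba.trans ha, fun _ _ hTu _ hj => hj.2 fun _ ht => hTu ht⟩

lemma isUIdeal_univ : IsUIdeal V (univ : Set P) :=
  ⟨isLowerSet_univ, fun _ _ _ _ _ => mem_univ _⟩

lemma IsUIdeal.inter {I J : Set P} (hI : IsUIdeal V I) (hJ : IsUIdeal V J) :
    IsUIdeal V (I ∩ J) :=
  ⟨hI.1.inter hJ.1, fun T hT hTIJ j hj =>
    ⟨hI.2 T hT (hTIJ.trans inter_subset_left) j hj,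
      hJ.2 T hT (hTIJ.trans inter_subset_right) j hj⟩⟩

lemma dcl_subset_of_isLowerSet {S I : Set P} (hI : IsLowerSet I) (h : S ⊆ I) : dcl S ⊆ I :=
  fun _ ⟨_, hs, hqs⟩ => hI hqs (h hs)

lemma gammaU_dcl (S : Set P) : GammaU V (dcl S) = GammaU V S :=
  (gammaU_subset_of_isUIdeal (isUIdeal_gammaU S)
    (dcl_subset_of_isLowerSet (isUIdeal_gammaU S).1 (subset_gammaU S))).antisymm
    (gammaU_mono fun s hs => ⟨s, hs, le_rfl⟩)

end GammaU

lemma singleton_mem_uGamma (Γ : Set P → Set P) (p : P) : {p} ∈ UGamma Γ :=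
  ⟨⟨p, isLUB_singleton⟩, fun _ _ hpC _ hj => hj.unique isLUB_singleton ▸ hpC rfl⟩

section UGamma

variable {V : Set (Set P)}

lemma IsUIdeal.mem_of_isLUB_of_mem_uGamma {C T : Set P} {j : P} (hC : IsUIdeal V C)
    (hT : T ∈ UGamma (GammaU V)) (hTC : T ⊆ C) (hj : IsLUB T j) : j ∈ C :=
  hT.2 C (gammaU_eq_self_iff.2 hC) hTC j hj

lemma subset_uGamma_gammaU (hV : ∀ S ∈ V, ∃ j, IsLUB S j) : V ⊆ UGamma (GammaU V) :=
  fun S hS => ⟨hV S hS, fun _ hC hSC j hj => (gammaU_eq_self_iff.1 hC).2 S hS hSC j hj⟩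

lemma isLUB_of_mem_gammaU {W : Set P} {b : P} (hb : b ∈ upperBounds W) (hbW : b ∈ GammaU V W) :
    IsLUB W b :=
  ⟨hb, fun _ hu => gammaU_subset_of_isUIdeal (isUIdeal_Iic _) (fun _ hx => hu hx) hbW⟩

lemma mem_uGamma_of_mem_gammaU {W : Set P} {b : P} (hb : b ∈ upperBounds W)
    (hbW : b ∈ GammaU V W) : W ∈ UGamma (GammaU V) := by
  have hlub := isLUB_of_mem_gammaU hb hbW
  refine ⟨⟨b, hlub⟩, fun C hC hWC j hj => ?_⟩
  rw [hj.unique hlub, ← hC]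
  exact gammaU_mono hWC hbW

end UGamma

lemma exists_isRegular_chiOrd_eq {α : Type*} (U : Set (Set α)) :
    ∃ c : Cardinal, c.IsRegular ∧ radius U ≤ c ∧ chiOrd U = c.ord := by
  have hne : {c : Cardinal | c.IsRegular ∧ radius U ≤ c}.Nonempty :=
    ⟨Order.succ (max (radius U) Cardinal.aleph0),
      Cardinal.isRegular_succ (le_max_right _ _), (le_max_left _ _).trans (Order.le_succ _)⟩
  exact ⟨_, (csInf_mem hne).1, (csInf_mem hne).2, rfl⟩

lemma mk_lt_radius {α : Type*} {U : Set (Set α)} {T : Set α} (hT : T ∈ U) : Cardinal.mk T < radius U :=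
  (Order.lt_succ _).trans_le <| le_ciSup Cardinal.bddAbove_of_small (⟨T, hT⟩ : U)

section upsIter

variable (U : Set (Set P)) (S : Set P)

lemma upsIter_zero : upsIter U S 0 = dcl S :=
  Ordinal.limitRecOn_zero _ _ _

lemma upsIter_add_one (o : Ordinal) :
    upsIter U S (o + 1) = {p | ∃ T ∈ U, T ⊆ upsIter U S o ∧ IsLUB T p} :=
  Ordinal.limitRecOn_add_one _ _ _ _

lemma upsIter_limit {o : Ordinal} (ho : Order.IsSuccLimit o) :
    upsIter U S o = ⋃ b < o, upsIter U S b :=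
  Ordinal.limitRecOn_limit _ _ _ _ ho

variable {U}

lemma upsIter_subset_add_one (hU : ∀ p, {p} ∈ U) (o : Ordinal) :
    upsIter U S o ⊆ upsIter U S (o + 1) := by
  rw [upsIter_add_one]
  exact fun p hp => ⟨{p}, hU p, singleton_subset_iff.2 hp, isLUB_singleton⟩

lemma upsIter_mono (hU : ∀ p, {p} ∈ U) : Monotone (upsIter U S) := by
  intro b o hbo
  induction o using Ordinal.limitRecOn with
  | zero => rw [nonpos_iff_eq_zero.1 hbo]
  | add_one o ih =>
    rcases hbo.lt_or_eq with hlt | rfl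
    · exact (ih (Order.lt_add_one_iff.1 hlt)).trans (upsIter_subset_add_one S hU o)
    · exact subset_rfl
  | limit o ho _ =>
    rcases hbo.lt_or_eq with hlt | rfl
    · rw [upsIter_limit U S ho]
      exact subset_biUnion_of_mem (u := upsIter U S) hlt
    · exact subset_rfl

lemma dcl_subset_upsIter (hU : ∀ p, {p} ∈ U) (o : Ordinal) : dcl S ⊆ upsIter U S o :=
  upsIter_zero U S ▸ upsIter_mono S hU zero_le

/-- The iteration stops at `χ'`: a member of `U` has fewer than `cof χ' = χ'` elements, so it
already lies in an earlier stage. -/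
lemma mem_upsIter_chiOrd_of_isLUB (hU : ∀ p, {p} ∈ U) {T : Set P} {j : P} (hT : T ∈ U)
    (hTS : T ⊆ upsIter U S (chiOrd U)) (hj : IsLUB T j) : j ∈ upsIter U S (chiOrd U) := by
  obtain ⟨c, hreg, hrad, hχ⟩ := exists_isRegular_chiOrd_eq U
  have hlim : Order.IsSuccLimit (chiOrd U) := hχ ▸ Cardinal.isSuccLimit_ord hreg.aleph0_le
  have hstage : ∀ t : T, ∃ b < chiOrd U, (t : P) ∈ upsIter U S b := by
    intro t
    simpa [upsIter_limit U S hlim] using hTS t.2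
  choose f hf hft using hstage
  have hsup : ⨆ t, f t < chiOrd U := by
    refine Ordinal.iSup_lt_of_lt_cof ?_ hf
    rw [hχ, hreg.cof_ord]
    exact (mk_lt_radius hT).trans_le hrad
  have hTsup : T ⊆ upsIter U S (⨆ t, f t) := fun t ht =>
    upsIter_mono S hU (Ordinal.le_iSup f ⟨t, ht⟩) (hft ⟨t, ht⟩)
  have hj_succ : j ∈ upsIter U S ((⨆ t, f t) + 1) := by
    rw [upsIter_add_one]
    exact ⟨T, hT, hTsup, hj⟩
  exact upsIter_mono S hU (hlim.add_one_lt hsup).le hj_succ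

end upsIter

section Upsilon

variable {V : Set (Set P)}

lemma dcl_subset_upsilon (S : Set P) : dcl S ⊆ Upsilon V S :=
  dcl_subset_upsIter S (singleton_mem_uGamma _) _

lemma inter_upsIter_subset_gammaU {I : Set P} (hI : IsUIdeal V I) (S : Set P) (o : Ordinal) :
    I ∩ upsIter (UGamma (GammaU V)) S o ⊆ GammaU V (I ∩ dcl S) := by
  induction o using Ordinal.limitRecOn with
  | zero =>
    rw [upsIter_zero]
    exact subset_gammaU _
  | add_one o ih =>
    rw [upsIter_add_one]
    rintro p ⟨hpI, T, hT, hTo, hTp⟩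
    refine (isUIdeal_gammaU _).mem_of_isLUB_of_mem_uGamma hT (fun t ht => ?_) hTp
    exact ih ⟨hI.1 (hTp.1 ht) hpI, hTo ht⟩
  | limit o ho ih =>
    rw [upsIter_limit _ _ ho]
    rintro p ⟨hpI, hp⟩
    obtain ⟨b, hb, hpb⟩ := mem_iUnion₂.1 hp
    exact ih b hb ⟨hpI, hpb⟩

lemma upsIter_subset_gammaU (S : Set P) (o : Ordinal) :
    upsIter (UGamma (GammaU V)) S o ⊆ GammaU V S := by
  simpa [gammaU_dcl] using inter_upsIter_subset_gammaU isUIdeal_univ S o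

lemma FrameLaw.Iic_inter_gammaU_subset (h : FrameLaw V) (b : P) (T : Set P) :
    Iic b ∩ GammaU V T ⊆ GammaU V (Iic b ∩ dcl T) := by
  have hdcl : ⋃₀ (Iic '' T) = dcl T := by
    ext x
    simp [dcl]
  have hframe := h (Iic b) (gammaU_eq_self_iff.2 (isUIdeal_Iic b)) (Iic '' T)
    (by rintro _ ⟨t, -, rfl⟩; exact gammaU_eq_self_iff.2 (isUIdeal_Iic t))
  rw [hdcl, gammaU_dcl, biUnion_image, ← inter_iUnion₂] at hframe
  rw [hframe, ← hdcl, sUnion_image]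

lemma FrameLaw.isLowerSet_upsIter (h : FrameLaw V) (S : Set P) (o : Ordinal) :
    IsLowerSet (upsIter (UGamma (GammaU V)) S o) := by
  induction o using Ordinal.limitRecOn with
  | zero =>
    rw [upsIter_zero]
    exact fun a b hba ⟨s, hs, has⟩ => ⟨s, hs, hba.trans has⟩
  | add_one o ih =>
    rw [upsIter_add_one]
    rintro a b hba ⟨T, hT, hTo, hTa⟩
    have ha : a ∈ GammaU V T :=
      (isUIdeal_gammaU T).mem_of_isLUB_of_mem_uGamma hT (subset_gammaU T) hTa
    have hb : b ∈ GammaU V (Iic b ∩ dcl T) :=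
      h.Iic_inter_gammaU_subset b T ⟨le_rfl, (isUIdeal_gammaU T).1 hba ha⟩
    have hub : b ∈ upperBounds (Iic b ∩ dcl T) := fun _ hx => hx.1
    exact ⟨_, mem_uGamma_of_mem_gammaU hub hb,
      inter_subset_right.trans (dcl_subset_of_isLowerSet ih hTo), isLUB_of_mem_gammaU hub hb⟩
  | limit o ho ih =>
    rw [upsIter_limit _ _ ho]
    exact isLowerSet_iUnion₂ ih

lemma FrameLaw.isUIdeal_upsilon (h : FrameLaw V) (hV : ∀ S ∈ V, ∃ j, IsLUB S j)
    (S : Set P) : IsUIdeal V (Upsilon V S) :=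
  ⟨h.isLowerSet_upsIter S _, fun _ hT hTS _ hj =>
    mem_upsIter_chiOrd_of_isLUB S (singleton_mem_uGamma _) (subset_uGamma_gammaU hV hT) hTS hj⟩

end Upsilon

theorem frame_iff_phi_eq_upsilon
    (V : Set (Set P)) (hV : IsJoinSpec V) :
    (∀ I : Set P, GammaU V I = I →
      ∀ 𝒦 : Set (Set P), (∀ K ∈ 𝒦, GammaU V K = K) →
        I ∩ GammaU V (⋃₀ 𝒦) = GammaU V (⋃ K ∈ 𝒦, I ∩ K)) ↔
    (∀ S : Set P, GammaU V S = Upsilon V S) := by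
  refine ⟨fun hframe S => ?_, fun hΥ I hI 𝒦 h𝒦 => ?_⟩
  · have h : FrameLaw V := hframe
    exact (gammaU_subset_of_isUIdeal (h.isUIdeal_upsilon hV.1 S)
      (fun s hs => dcl_subset_upsilon S ⟨s, hs, le_rfl⟩)).antisymm (upsIter_subset_gammaU S _)
  · have hIid := gammaU_eq_self_iff.1 hI
    have hdcl : I ∩ dcl (⋃₀ 𝒦) ⊆ ⋃ K ∈ 𝒦, I ∩ K := by
      rintro x ⟨hxI, s, ⟨K, hK, hsK⟩, hxs⟩
      exact mem_biUnion hK ⟨hxI, (gammaU_eq_self_iff.1 (h𝒦 K hK)).1 hxs hsK⟩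
    refine subset_antisymm ?_ (gammaU_subset_of_isUIdeal (hIid.inter (isUIdeal_gammaU _)) ?_)
    · calc I ∩ GammaU V (⋃₀ 𝒦) = I ∩ Upsilon V (⋃₀ 𝒦) := by rw [hΥ]
        _ ⊆ GammaU V (I ∩ dcl (⋃₀ 𝒦)) := inter_upsIter_subset_gammaU hIid _ _
        _ ⊆ GammaU V (⋃ K ∈ 𝒦, I ∩ K) := gammaU_mono hdcl
    · exact iUnion₂_subset fun K hK =>
        inter_subset_inter_right I (subset_sUnion_of_mem hK |>.trans (subset_gammaU _))
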